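/- arXiv:1807.05844 — 2 statements merged into one kernel-verified Lean document; each statement's English description precedes it below -/
import Mathlib

section
/- If φ : ℝⁿ × ℝᵐ → ℝ is convex and for each t the function x ↦ exp(-φ(x,t)) is integrable on ℝⁿ, then the function φ̃(t) := -log ∫_{ℝⁿ} exp(-φ(x,t)) dx is convex on ℝᵐ (Prékopa's theorem). -/
/-!
Prékopa's theorem is the marginal form of the Prékopa–Leindler inequality. On the line, the
superlevel sets of log-concave functions are intervals, for which the Brunn–Minkowski inequality
`|A| + |B| ≤ |A + B|` is elementary. Integrating it over the levels (layer cake formula) gives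
`a ∫ f + b ∫ g ≤ ∫ h` whenever `f` and `g` have the same supremum and
`f x ^ a * g y ^ b ≤ h (a x + b y)`; rescaling `g` and the weighted AM–GM inequality turn this into
`(∫ f) ^ a * (∫ g) ^ b ≤ ∫ h`. Applied to the slices of a log-concave function on `ℝ × E`, this says
that integrating out the real variable preserves log-concavity; by Fubini and induction the same
holds for `ℝⁿ × E`. Finally `exp (-φ)` is log-concave when `φ` is convex.
-/

open MeasureTheory ENNReal Set Pointwise

theorem ENNReal.min_le_rpow_mul_rpow {a b : ℝ} (ha : 0 ≤ a) (hb : 0 ≤ b) (hab : a + b = 1)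
    (x y : ℝ≥0∞) : min x y ≤ x ^ a * y ^ b :=
  calc min x y = min x y ^ a * min x y ^ b := by
        rw [← rpow_add_of_nonneg _ _ ha hb, hab, rpow_one]
    _ ≤ x ^ a * y ^ b := by gcongr <;> simp

theorem ENNReal.rpow_mul_rpow_le_add {a b : ℝ} (ha : 0 < a) (hb : 0 < b) (hab : a + b = 1)
    (x y : ℝ≥0∞) : x ^ a * y ^ b ≤ ENNReal.ofReal a * x + ENNReal.ofReal b * y := by
  have h := young_inequality (x ^ a) (y ^ b) (Real.HolderConjugate.inv_inv ha hb hab)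
  rwa [← rpow_mul, ← rpow_mul, mul_inv_cancel₀ ha.ne', mul_inv_cancel₀ hb.ne', rpow_one,
    rpow_one, ofReal_inv_of_pos ha, ofReal_inv_of_pos hb, div_eq_mul_inv, div_eq_mul_inv,
    inv_inv, inv_inv, mul_comm x, mul_comm y] at h

theorem lintegral_eq_lintegral_meas_ofReal_lt {α : Type*} [MeasurableSpace α] (μ : Measure α)
    {f : α → ℝ≥0∞} (hf : Measurable f) :
    ∫⁻ x, f x ∂μ = ∫⁻ t in Ioi 0, μ {x | ENNReal.ofReal t < f x} := by
  by_cases hfin : ∀ᵐ x ∂μ, f x ≠ ∞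
  · calc ∫⁻ x, f x ∂μ = ∫⁻ x, ENNReal.ofReal (f x).toReal ∂μ :=
          lintegral_congr_ae (hfin.mono fun x hx ↦ (ofReal_toReal hx).symm)
      _ = ∫⁻ t in Ioi 0, μ {x | t < (f x).toReal} :=
          lintegral_eq_lintegral_meas_lt μ (ae_of_all _ fun _ ↦ toReal_nonneg)
            hf.ennreal_toReal.aemeasurable
      _ = ∫⁻ t in Ioi 0, μ {x | ENNReal.ofReal t < f x} :=
          setLIntegral_congr_fun measurableSet_Ioi fun t ht ↦ measure_congr <|
            hfin.mono fun x hx ↦ propext (ofReal_lt_iff_lt_toReal (le_of_lt ht) hx).symm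
  · have hpos : μ {x | f x = ∞} ≠ 0 := by simpa [ae_iff] using hfin
    refine (lintegral_eq_top_of_measure_eq_top_ne_zero hf.aemeasurable hpos).trans
      (top_unique ?_).symm
    calc ∞ = ∫⁻ _ in Ioi (0 : ℝ), μ {x | f x = ∞} := by simp [hpos]
      _ ≤ ∫⁻ t in Ioi 0, μ {x | ENNReal.ofReal t < f x} :=
          lintegral_mono fun t ↦ measure_mono fun x (hx : f x = ∞) ↦ by simp [hx]

theorem lintegral_eq_iSup_lintegral_min_natCast {α : Type*} [MeasurableSpace α] (μ : Measure α)
    {f : α → ℝ≥0∞} (hf : Measurable f) :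
    ∫⁻ x, f x ∂μ = ⨆ n : ℕ, ∫⁻ x, min (f x) n ∂μ := by
  rw [← lintegral_iSup (fun n ↦ hf.min measurable_const)
    fun n m hnm x ↦ min_le_min_left _ (Nat.cast_le.2 hnm)]
  simp only [← inf_iSup_eq, iSup_natCast, min_top_right]

theorem Convex.addHaar_closure {E : Type*} [NormedAddCommGroup E] [NormedSpace ℝ E]
    [MeasurableSpace E] [BorelSpace E] [FiniteDimensional ℝ E] (μ : Measure E)
    [μ.IsAddHaarMeasure] {s : Set E} (hs : Convex ℝ s) : μ (closure s) = μ s := by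
  refine le_antisymm ?_ (measure_mono subset_closure)
  calc μ (closure s) ≤ μ s + μ (frontier s) := by
        rw [closure_eq_self_union_frontier]; exact measure_union_le _ _
    _ = μ s := by rw [hs.addHaar_frontier μ, add_zero]

theorem measure_add_singleton {G : Type*} [AddGroup G] [MeasurableSpace G] [MeasurableAdd G]
    (μ : Measure G) [μ.IsAddRightInvariant] (s : Set G) (g : G) : μ (s + {g}) = μ s := by
  rw [add_singleton, image_add_right, measure_preimage_add_right]

theorem measure_le_measure_add {G : Type*} [AddGroup G] [MeasurableSpace G] [MeasurableAdd G]
    (μ : Measure G) [μ.IsAddRightInvariant] (s : Set G) {t : Set G} (ht : t.Nonempty) :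
    μ s ≤ μ (s + t) := by
  obtain ⟨g, hg⟩ := ht
  calc μ s = μ (s + {g}) := (measure_add_singleton μ s g).symm
    _ ≤ μ (s + t) := measure_mono (add_subset_add_left (singleton_subset_iff.2 hg))

theorem Convex.bddAbove_of_volume_ne_top {s : Set ℝ} (hs : Convex ℝ s) (hs' : volume s ≠ ∞) :
    BddAbove s := by
  by_contra hbdd
  obtain ⟨x, hx⟩ := not_bddAbove_iff.1 hbdd 0
  have : Ici x ⊆ s := fun y hy ↦
    let ⟨z, hz, hyz⟩ := not_bddAbove_iff.1 hbdd y
    hs.ordConnected.out hx.1 hz ⟨hy, hyz.le⟩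
  exact hs' (top_unique (Real.volume_Ici (a := x) ▸ measure_mono this))

theorem Convex.bddBelow_of_volume_ne_top {s : Set ℝ} (hs : Convex ℝ s) (hs' : volume s ≠ ∞) :
    BddBelow s :=
  bddAbove_neg.1 (hs.neg.bddAbove_of_volume_ne_top (by rwa [Measure.measure_neg]))

namespace Real

theorem volume_add_volume_le_volume_add {A B : Set ℝ} (hA : Convex ℝ A) (hB : Convex ℝ B)
    (hA₀ : A.Nonempty) (hB₀ : B.Nonempty) : volume A + volume B ≤ volume (A + B) := by
  rcases eq_or_ne (volume A) ∞ with hA' | hA'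
  · simpa [hA'] using measure_le_measure_add volume A hB₀
  rcases eq_or_ne (volume B) ∞ with hB' | hB'
  · simpa [hB', add_comm A] using measure_le_measure_add volume B hA₀
  -- The translates `A + inf B` and `B + sup A` meet in a single point and lie in
  -- `closure (A + B)`.
  set a := sSup A
  set b := sInf B
  have ha : a ∈ closure A := csSup_mem_closure hA₀ (hA.bddAbove_of_volume_ne_top hA')
  have hb : b ∈ closure B := csInf_mem_closure hB₀ (hB.bddBelow_of_volume_ne_top hB')
  have hcl : (A + {b}) ∪ (B + {a}) ⊆ closure (A + B) := by
    rintro _ (⟨x, hx, _, rfl, rfl⟩ | ⟨y, hy, _, rfl, rfl⟩)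
    · exact map_mem_closure₂ continuous_add (subset_closure hx) hb
        fun _ h _ h' ↦ add_mem_add h h'
    · show y + a ∈ _
      rw [add_comm y a]
      exact map_mem_closure₂ continuous_add ha (subset_closure hy)
        fun _ h _ h' ↦ add_mem_add h h'
  have hinter : (A + {b}) ∩ (B + {a}) ⊆ {a + b} := by
    rintro _ ⟨⟨x, hx, _, rfl, rfl⟩, ⟨y, hy, _, rfl, hxy⟩⟩
    have : x ≤ a := le_csSup (hA.bddAbove_of_volume_ne_top hA') hx
    have : b ≤ y := csInf_le (hB.bddBelow_of_volume_ne_top hB') hy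
    exact mem_singleton_iff.2 (by linarith)
  calc volume A + volume B = volume (A + {b}) + volume (B + {a}) := by
        rw [measure_add_singleton, measure_add_singleton]
    _ = volume ((A + {b}) ∪ (B + {a})) := by
        rw [← measure_union_add_inter₀ (μ := volume) _
          ((hB.add (convex_singleton a)).nullMeasurableSet _),
          measure_mono_null hinter (measure_singleton _), add_zero]
    _ ≤ volume (closure (A + B)) := measure_mono hcl
    _ = volume (A + B) := (hA.add hB).addHaar_closure volume

variable {a b : ℝ} {f g h : ℝ → ℝ≥0∞}

theorem ofReal_mul_volume_superlevel_add_le (ha : 0 < a) (hb : 0 < b) (hab : a + b = 1)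
    (hf : QuasiconcaveOn ℝ univ f) (hg : QuasiconcaveOn ℝ univ g)
    (hfg : ⨆ x, f x = ⨆ y, g y) (hfgh : ∀ x y, f x ^ a * g y ^ b ≤ h (a * x + b * y))
    (r : ℝ≥0∞) :
    ENNReal.ofReal a * volume {x | r < f x} + ENNReal.ofReal b * volume {y | r < g y}
      ≤ volume {z | r < h z} := by
  by_cases hr : r < ⨆ x, f x
  · have hsub : a • {x | r < f x} + b • {y | r < g y} ⊆ {z | r < h z} := by
      rintro _ ⟨_, ⟨x, hx, rfl⟩, _, ⟨y, hy, rfl⟩, rfl⟩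
      calc r < min (f x) (g y) := lt_min hx hy
        _ ≤ f x ^ a * g y ^ b := min_le_rpow_mul_rpow ha.le hb.le hab _ _
        _ ≤ h (a * x + b * y) := hfgh x y
    have hfc : Convex ℝ {x | r < f x} := by simpa using hf.convex_gt r
    have hgc : Convex ℝ {y | r < g y} := by simpa using hg.convex_gt r
    have hr' : r < ⨆ y, g y := hfg ▸ hr
    calc ENNReal.ofReal a * volume {x | r < f x} + ENNReal.ofReal b * volume {y | r < g y}
        = volume (a • {x | r < f x}) + volume (b • {y | r < g y}) := by
          simp [abs_of_pos ha, abs_of_pos hb]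
      _ ≤ volume (a • {x | r < f x} + b • {y | r < g y}) :=
          volume_add_volume_le_volume_add (hfc.smul a) (hgc.smul b)
            (Nonempty.smul_set (lt_iSup_iff.1 hr)) (Nonempty.smul_set (lt_iSup_iff.1 hr'))
      _ ≤ volume {z | r < h z} := measure_mono hsub
  · have hf₀ : {x | r < f x} = ∅ :=
      eq_empty_of_forall_notMem fun x hx ↦ hr (hx.trans_le (le_iSup f x))
    have hg₀ : {y | r < g y} = ∅ :=
      eq_empty_of_forall_notMem fun y hy ↦ hr (hfg ▸ hy.trans_le (le_iSup g y))
    simp [hf₀, hg₀]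

theorem ofReal_mul_lintegral_add_le_of_iSup_eq (hfm : Measurable f) (hgm : Measurable g)
    (hhm : Measurable h) (ha : 0 < a) (hb : 0 < b) (hab : a + b = 1)
    (hf : QuasiconcaveOn ℝ univ f) (hg : QuasiconcaveOn ℝ univ g)
    (hfg : ⨆ x, f x = ⨆ y, g y) (hfgh : ∀ x y, f x ^ a * g y ^ b ≤ h (a * x + b * y)) :
    ENNReal.ofReal a * (∫⁻ x, f x) + ENNReal.ofReal b * ∫⁻ y, g y ≤ ∫⁻ z, h z := by
  rw [lintegral_eq_lintegral_meas_ofReal_lt volume hfm,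
    lintegral_eq_lintegral_meas_ofReal_lt volume hgm,
    lintegral_eq_lintegral_meas_ofReal_lt volume hhm, ← lintegral_const_mul' _ _ ofReal_ne_top,
    ← lintegral_const_mul' _ _ ofReal_ne_top]
  exact (le_lintegral_add _ _).trans <| lintegral_mono fun t ↦
    ofReal_mul_volume_superlevel_add_le ha hb hab hf hg hfg hfgh _

theorem lintegral_rpow_mul_lintegral_rpow_le_of_iSup_ne (hfm : Measurable f)
    (hgm : Measurable g) (hhm : Measurable h) (ha : 0 < a) (hb : 0 < b) (hab : a + b = 1)
    (hf : QuasiconcaveOn ℝ univ f) (hg : QuasiconcaveOn ℝ univ g)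
    (hf₀ : ⨆ x, f x ≠ 0) (hf_top : ⨆ x, f x ≠ ∞) (hg₀ : ⨆ y, g y ≠ 0) (hg_top : ⨆ y, g y ≠ ∞)
    (hfgh : ∀ x y, f x ^ a * g y ^ b ≤ h (a * x + b * y)) :
    (∫⁻ x, f x) ^ a * (∫⁻ y, g y) ^ b ≤ ∫⁻ z, h z := by
  set c := (⨆ x, f x) / ⨆ y, g y
  have hc₀ : c ≠ 0 := (ENNReal.div_pos hf₀ hg_top).ne'
  have hc_top : c ≠ ∞ := (ENNReal.div_lt_top hf_top hg₀).ne
  have hcb₀ : c ^ b ≠ 0 := (rpow_pos (pos_iff_ne_zero.2 hc₀) hc_top).ne'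
  have hcb_top : c ^ b ≠ ∞ := rpow_ne_top_of_nonneg hb.le hc_top
  have key := ofReal_mul_lintegral_add_le_of_iSup_eq hfm (hgm.const_mul c)
    (hhm.const_mul (c ^ b)) ha hb hab hf (hg.monotone_comp fun _ _ h ↦ by gcongr)
    (by rw [← mul_iSup, ENNReal.div_mul_cancel hg₀ hg_top]) fun x y ↦ by
      rw [mul_rpow_of_nonneg _ _ hb.le, mul_left_comm]; gcongr; exact hfgh x y
  rw [lintegral_const_mul' _ _ hc_top, lintegral_const_mul' _ _ hcb_top] at key
  refine (ENNReal.mul_le_mul_iff_right hcb₀ hcb_top).1 ?_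
  calc c ^ b * ((∫⁻ x, f x) ^ a * (∫⁻ y, g y) ^ b)
      = (∫⁻ x, f x) ^ a * (c * ∫⁻ y, g y) ^ b := by
        rw [mul_rpow_of_nonneg _ _ hb.le, mul_left_comm]
    _ ≤ ENNReal.ofReal a * (∫⁻ x, f x) + ENNReal.ofReal b * (c * ∫⁻ y, g y) :=
        rpow_mul_rpow_le_add ha hb hab _ _
    _ ≤ c ^ b * ∫⁻ z, h z := key

theorem lintegral_rpow_mul_lintegral_rpow_le (hfm : Measurable f) (hgm : Measurable g)
    (hhm : Measurable h) (ha : 0 < a) (hb : 0 < b) (hab : a + b = 1)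
    (hf : QuasiconcaveOn ℝ univ f) (hg : QuasiconcaveOn ℝ univ g)
    (hfgh : ∀ x y, f x ^ a * g y ^ b ≤ h (a * x + b * y)) :
    (∫⁻ x, f x) ^ a * (∫⁻ y, g y) ^ b ≤ ∫⁻ z, h z := by
  have htrunc (n m : ℕ) :
      (∫⁻ x, min (f x) n) ^ a * (∫⁻ y, min (g y) m) ^ b ≤ ∫⁻ z, h z := by
    by_cases hf₀ : ⨆ x, min (f x) n = 0
    · simp [iSup_eq_zero.1 hf₀, zero_rpow_of_pos ha]
    by_cases hg₀ : ⨆ y, min (g y) m = 0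
    · simp [iSup_eq_zero.1 hg₀, zero_rpow_of_pos hb]
    refine lintegral_rpow_mul_lintegral_rpow_le_of_iSup_ne (hfm.min measurable_const)
      (hgm.min measurable_const) hhm ha hb hab
      (hf.monotone_comp fun _ _ h ↦ min_le_min_right _ h)
      (hg.monotone_comp fun _ _ h ↦ min_le_min_right _ h) hf₀
      (ne_top_of_le_ne_top (natCast_ne_top n) (iSup_le fun _ ↦ min_le_right _ _)) hg₀
      (ne_top_of_le_ne_top (natCast_ne_top m) (iSup_le fun _ ↦ min_le_right _ _)) fun x y ↦ ?_
    calc min (f x) n ^ a * min (g y) m ^ b ≤ f x ^ a * g y ^ b := by gcongr <;> simp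
      _ ≤ h (a * x + b * y) := hfgh x y
  rw [lintegral_eq_iSup_lintegral_min_natCast volume hfm,
    lintegral_eq_iSup_lintegral_min_natCast volume hgm]
  simp only [← orderIsoRpow_apply a ha, ← orderIsoRpow_apply b hb, OrderIso.map_iSup,
    ENNReal.iSup_mul, ENNReal.mul_iSup]
  exact iSup₂_le fun m n ↦ htrunc n m

end Real

def LogConcave {E : Type*} [AddCommGroup E] [Module ℝ E] (f : E → ℝ≥0∞) : Prop :=
  ∀ x y ⦃a b : ℝ⦄, 0 < a → 0 < b → a + b = 1 → f x ^ a * f y ^ b ≤ f (a • x + b • y)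

namespace LogConcave

variable {E : Type*} [AddCommGroup E] [Module ℝ E]

theorem quasiconcaveOn {f : E → ℝ≥0∞} (hf : LogConcave f) : QuasiconcaveOn ℝ univ f := by
  refine quasiconcaveOn_iff_min_le.2 ⟨convex_univ, fun x _ y _ a b ha hb hab ↦ ?_⟩
  rcases ha.eq_or_lt with rfl | ha
  · simp [show b = 1 by linarith]
  rcases hb.eq_or_lt with rfl | hb
  · simp [show a = 1 by linarith]
  exact (min_le_rpow_mul_rpow ha.le hb.le hab _ _).trans (hf x y ha hb hab)

theorem convexOn_neg_log {f : E → ℝ} (hpos : ∀ x, 0 < f x)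
    (hf : LogConcave fun x ↦ ENNReal.ofReal (f x)) :
    ConvexOn ℝ univ fun x ↦ -Real.log (f x) := by
  refine ⟨convex_univ, fun x _ y _ a b ha hb hab ↦ ?_⟩
  rcases ha.eq_or_lt with rfl | ha
  · simp [show b = 1 by linarith]
  rcases hb.eq_or_lt with rfl | hb
  · simp [show a = 1 by linarith]
  have hx := hpos x
  have hy := hpos y
  have h := hf x y ha hb hab
  rw [ofReal_rpow_of_pos hx, ofReal_rpow_of_pos hy, ← ofReal_mul (by positivity),
    ofReal_le_ofReal_iff (hpos _).le] at h
  have h := Real.log_le_log (by positivity) h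
  rw [Real.log_mul (by positivity) (by positivity), Real.log_rpow hx, Real.log_rpow hy] at h
  simp only [smul_eq_mul]
  linarith

theorem _root_.ConvexOn.logConcave_ofReal_exp_neg {φ : E → ℝ} (hφ : ConvexOn ℝ univ φ) :
    LogConcave fun z ↦ ENNReal.ofReal (Real.exp (-φ z)) := by
  intro x y a b ha hb hab
  rw [ofReal_rpow_of_pos (Real.exp_pos _), ofReal_rpow_of_pos (Real.exp_pos _),
    ← ofReal_mul (by positivity), ← Real.exp_mul, ← Real.exp_mul, ← Real.exp_add]
  have := hφ.2 (mem_univ x) (mem_univ y) ha.le hb.le hab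
  simp only [smul_eq_mul] at this
  exact ofReal_le_ofReal (Real.exp_le_exp.2 (by linarith))

variable [MeasurableSpace E]

theorem lintegral_fst {F : ℝ × E → ℝ≥0∞} (hF : LogConcave F) (hFm : Measurable F) :
    LogConcave fun t ↦ ∫⁻ s, F (s, t) := by
  have hslice (t : E) : LogConcave fun s ↦ F (s, t) := fun x y a b ha hb hab ↦ by
    simpa [Convex.combo_self hab] using hF (x, t) (y, t) ha hb hab
  intro t₀ t₁ a b ha hb hab
  refine Real.lintegral_rpow_mul_lintegral_rpow_le (hFm.comp measurable_prodMk_right)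
    (hFm.comp measurable_prodMk_right) (hFm.comp measurable_prodMk_right) ha hb hab
    (hslice t₀).quasiconcaveOn (hslice t₁).quasiconcaveOn fun x y ↦ ?_
  simpa using hF (x, t₀) (y, t₁) ha hb hab

end LogConcave

theorem lintegral_fin_succ_eq_lintegral_lintegral_cons {α : Type*} [MeasureSpace α]
    [SigmaFinite (volume : Measure α)] {n : ℕ} {f : (Fin (n + 1) → α) → ℝ≥0∞}
    (hf : Measurable f) : ∫⁻ x, f x = ∫⁻ x, ∫⁻ s, f (Fin.cons s x) := by
  rw [← ((volume_preserving_piFinSuccAbove (fun _ ↦ α) 0).symm).lintegral_comp hf,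
    Measure.volume_eq_prod, lintegral_prod_symm (fun p ↦ f _)
      (hf.comp (MeasurableEquiv.measurable _)).aemeasurable]
  simp [MeasurableEquiv.piFinSuccAbove_symm_apply, Fin.insertNthEquiv, Fin.insertNth_zero']

theorem LogConcave.lintegral_fst_pi {n : ℕ} {E : Type*} [AddCommGroup E] [Module ℝ E]
    [MeasurableSpace E] {F : (Fin n → ℝ) × E → ℝ≥0∞} (hF : LogConcave F) (hFm : Measurable F) :
    LogConcave fun t ↦ ∫⁻ x, F (x, t) := by
  induction n generalizing E with
  | zero =>
    have hF₀ (t : E) : ∫⁻ x : Fin 0 → ℝ, F (x, t) = F (default, t) := by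
      rw [lintegral_unique, volume_pi, Measure.pi_empty_univ, mul_one]
      exact congrArg (fun x ↦ F (x, t)) (Subsingleton.elim _ _)
    intro t₀ t₁ a b ha hb hab
    simp only [hF₀]
    convert hF (default, t₀) (default, t₁) ha hb hab using 2
    exact Prod.ext (Subsingleton.elim _ _) (by simp)
  | succ n ih =>
    set G : ℝ × (Fin n → ℝ) × E → ℝ≥0∞ := fun p ↦ F (Fin.cons p.1 p.2.1, p.2.2)
    have hGm : Measurable G := hFm.comp (by fun_prop)
    have hG : LogConcave G := fun p q a b ha hb hab ↦ by
      have hcons : a • (Fin.cons p.1 p.2.1 : Fin (n + 1) → ℝ) + b • Fin.cons q.1 q.2.1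
          = Fin.cons (a * p.1 + b * q.1) (a • p.2.1 + b • q.2.1) := by
        ext i; cases i using Fin.cases <;> simp
      simpa [G, hcons] using
        hF (Fin.cons p.1 p.2.1, p.2.2) (Fin.cons q.1 q.2.1, q.2.2) ha hb hab
    have hHm : Measurable fun p : (Fin n → ℝ) × E ↦ ∫⁻ s, G (s, p) :=
      Measurable.lintegral_prod_right (f := fun p s ↦ G (s, p)) (hGm.comp measurable_swap)
    convert ih (hG.lintegral_fst hGm) hHm using 2 with t
    exact lintegral_fin_succ_eq_lintegral_lintegral_cons (hFm.comp measurable_prodMk_right)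

/-- **Prékopa's theorem.** If `φ : ℝⁿ × ℝᵐ → ℝ` is (jointly) convex and for each `t`
the function `x ↦ exp (-φ (x, t))` is integrable on `ℝⁿ`, then
`t ↦ -log ∫ exp (-φ (x, t)) dx` is convex on `ℝᵐ`. -/
theorem prekopa (n m : ℕ) (φ : (Fin n → ℝ) × (Fin m → ℝ) → ℝ)
    (hφ : ConvexOn ℝ Set.univ φ)
    (hint : ∀ t : Fin m → ℝ, Integrable (fun x : Fin n → ℝ => Real.exp (-φ (x, t)))) :
    ConvexOn ℝ Set.univ
      (fun t : Fin m → ℝ => -Real.log (∫ x : Fin n → ℝ, Real.exp (-φ (x, t)))) := by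
  have hφc : Continuous φ := continuousOn_univ.1 (hφ.continuousOn isOpen_univ)
  have hJ := hφ.logConcave_ofReal_exp_neg.lintegral_fst_pi (by fun_prop)
  refine LogConcave.convexOn_neg_log (fun t ↦ integral_exp_pos (hint t)) ?_
  simpa only [ofReal_integral_eq_lintegral_ofReal (hint _)
    (ae_of_all _ fun _ ↦ (Real.exp_pos _).le)] using hJ
end

section
/- Kiselman's example: the function φ(t,z) = |z|² - 2 Re(zt) on ℂ² is plurisubharmonic, but φ̃(t) := -log ∫_{|z|<1} e^{-φ(t,z)} dλ(z) is not plurisubharmonic (indeed not subharmonic) in t. -/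
/-!
Along a complex line `w ↦ a + w • b`, `φ` is `|a₂ + w b₂|²` minus the real part of a holomorphic
polynomial in `w`, so by the mean value property its average over a circle of radius `r` exceeds
its value at the centre by `r² |b₂|²`.

The integral `I(t) = ∫_{|z|<1} e^{-φ(t,z)}` is invariant under rotations of `t`, since the disc is;
hence `φ̃ = -log I` is constant, equal to `φ̃(1)`, on the unit circle. Pairing `t` with `-t`,
`e^{-φ(t,z)} + e^{-φ(-t,z)} = 2 e^{-|z|²} cosh (2 Re (z t))`, which exceeds `2 e^{-|z|²}` off a
line, so `I(1) > I(0)`, i.e. `φ̃(1) < φ̃(0)`: the circle average of `φ̃` lies below its centre value.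
-/

open MeasureTheory Real

/-- Kiselman's function `φ(t, z) = |z|² - 2 Re(z t)` on `ℂ² = ℂ_t × ℂ_z`. -/
noncomputable def kiselmanPhi (p : ℂ × ℂ) : ℝ :=
  Complex.normSq p.2 - 2 * (p.2 * p.1).re

/-- `φ̃(t) = -log ∫_{|z|<1} e^{-φ(t,z)} dλ(z)`. -/
noncomputable def kiselmanPhiTilde (t : ℂ) : ℝ :=
  -Real.log (∫ z in Metric.ball (0 : ℂ) 1, Real.exp (-kiselmanPhi (t, z)))

open Complex ComplexConjugate Metric

lemma circleAverage_eq_inv_mul_integral (f : ℂ → ℝ) (c : ℂ) (R : ℝ) :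
    circleAverage f c R = (2 * π)⁻¹ * ∫ θ in (0:ℝ)..2 * π, f (c + R * exp (θ * I)) := rfl

lemma kiselmanPhi_add_smul (p b : ℂ × ℂ) (ζ : ℂ) :
    kiselmanPhi (p + ζ • b) = kiselmanPhi p + normSq ζ * normSq b.2 +
      (2 * ((conj p.2 * b.2 - p.2 * b.1 - p.1 * b.2) * ζ - b.1 * b.2 * ζ ^ 2)).re := by
  simp only [kiselmanPhi, Prod.fst_add, Prod.snd_add, Prod.smul_fst, Prod.smul_snd, smul_eq_mul,
    normSq_apply, add_re, add_im, mul_re, mul_im, sub_re, sub_im, conj_re, conj_im, pow_two,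
    re_ofNat, im_ofNat]
  ring

lemma circleAverage_kiselmanPhi_add_smul (a b : ℂ × ℂ) (c : ℂ) (r : ℝ) :
    circleAverage (fun w ↦ kiselmanPhi (a + w • b)) c r =
      kiselmanPhi (a + c • b) + r ^ 2 * normSq b.2 := by
  set p := a + c • b
  set h : ℂ → ℂ := fun w ↦ ((kiselmanPhi p + r ^ 2 * normSq b.2 : ℝ) : ℂ) +
    2 * ((conj p.2 * b.2 - p.2 * b.1 - p.1 * b.2) * (w - c) - b.1 * b.2 * (w - c) ^ 2)
  have h_sphere : ∀ w ∈ sphere c |r|, kiselmanPhi (a + w • b) = (h w).re := by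
    intro w hw
    have hnorm : normSq (w - c) = r ^ 2 := by
      rw [normSq_eq_norm_sq, ← Complex.dist_eq, mem_sphere.1 hw, sq_abs]
    rw [show a + w • b = p + (w - c) • b by simp only [p, sub_smul]; abel,
      kiselmanPhi_add_smul, hnorm, add_re, ofReal_re]
  have h_diff : Differentiable ℂ h := by fun_prop
  rw [circleAverage_congr_sphere h_sphere, show (fun w ↦ (h w).re) = reCLM ∘ h from rfl,
    reCLM.circleAverage_comp_comm (h_diff.continuous.continuousOn.circleIntegrable'),
    h_diff.diffContOnCl.circleAverage]
  simp only [h, reCLM_apply, sub_self, zero_pow two_ne_zero, mul_zero, add_zero, ofReal_re]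

noncomputable def kiselmanIntegral (t : ℂ) : ℝ :=
  ∫ z in ball (0 : ℂ) 1, Real.exp (-kiselmanPhi (t, z))

lemma kiselmanPhiTilde_eq_neg_log (t : ℂ) :
    kiselmanPhiTilde t = -Real.log (kiselmanIntegral t) := rfl

lemma continuous_exp_neg_kiselmanPhi (t : ℂ) :
    Continuous fun z ↦ Real.exp (-kiselmanPhi (t, z)) := by
  unfold kiselmanPhi
  fun_prop

lemma integrableOn_exp_neg_kiselmanPhi (t : ℂ) :
    IntegrableOn (fun z ↦ Real.exp (-kiselmanPhi (t, z))) (ball 0 1) :=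
  ((continuous_exp_neg_kiselmanPhi t).continuousOn.integrableOn_compact
    (isCompact_closedBall 0 1)).mono_set ball_subset_closedBall

lemma kiselmanIntegral_pos (t : ℂ) : 0 < kiselmanIntegral t := by
  have : NeZero (volume.restrict (ball (0 : ℂ) 1)) :=
    ⟨by rw [Ne, Measure.restrict_eq_zero]; exact (measure_ball_pos volume 0 one_pos).ne'⟩
  exact integral_exp_pos (integrableOn_exp_neg_kiselmanPhi t)

lemma kiselmanPhi_mul_left {u : ℂ} (hu : ‖u‖ = 1) (t z : ℂ) :
    kiselmanPhi (u * t, z) = kiselmanPhi (t, u * z) := by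
  have hu' : normSq u = 1 := by rw [normSq_eq_norm_sq, hu, one_pow]
  simp only [kiselmanPhi, map_mul, hu', one_mul, mul_left_comm z u t, mul_assoc]

lemma kiselmanIntegral_mul (u : Circle) (t : ℂ) :
    kiselmanIntegral (u * t) = kiselmanIntegral t := by
  have h_ball : rotation u ⁻¹' ball 0 1 = ball 0 1 := by
    ext z
    simp only [Set.mem_preimage, mem_ball_zero_iff, rotation_apply, norm_mul, Circle.norm_coe,
      one_mul]
  have h := (rotation u).measurePreserving.setIntegral_preimage_emb
    (rotation u).toHomeomorph.measurableEmbedding (fun z ↦ Real.exp (-kiselmanPhi (t, z)))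
    (ball 0 1)
  rw [h_ball] at h
  simp only [kiselmanIntegral, kiselmanPhi_mul_left (Circle.norm_coe u), ← h, rotation_apply]

lemma kiselmanPhiTilde_of_norm_eq_one {t : ℂ} (ht : ‖t‖ = 1) :
    kiselmanPhiTilde t = kiselmanPhiTilde 1 := by
  have h_rot := kiselmanIntegral_mul ⟨t, mem_sphere_zero_iff_norm.2 ht⟩ 1
  rw [mul_one] at h_rot
  rw [kiselmanPhiTilde_eq_neg_log, kiselmanPhiTilde_eq_neg_log, h_rot]

lemma exp_neg_kiselmanPhi_add_exp_neg_kiselmanPhi_neg (t z : ℂ) :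
    Real.exp (-kiselmanPhi (t, z)) + Real.exp (-kiselmanPhi (-t, z)) =
      2 * Real.exp (-kiselmanPhi (0, z)) * Real.cosh (2 * (z * t).re) := by
  simp only [kiselmanPhi, Real.cosh_eq, mul_zero, zero_re, mul_neg, neg_re]
  set x := 2 * (z * t).re
  rw [show -(normSq z - x) = -(normSq z - 0) + x by ring,
    show -(normSq z - -x) = -(normSq z - 0) + -x by ring, Real.exp_add, Real.exp_add]
  ring

lemma exists_mem_ball_re_mul_ne_zero {t : ℂ} (ht : t ≠ 0) :
    ∃ z ∈ ball (0 : ℂ) 1, (z * t).re ≠ 0 := by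
  have h_norm_pos : 0 < ‖t‖ := norm_pos_iff.2 ht
  refine ⟨conj t / (2 * ‖t‖), ?_, ?_⟩
  · rw [mem_ball_zero_iff, norm_div, RCLike.norm_conj, norm_mul, norm_real, Complex.norm_ofNat,
      norm_norm, div_lt_one (by positivity)]
    linarith
  · rw [div_mul_eq_mul_div, conj_mul', ← ofReal_pow, ← ofReal_ofNat, ← ofReal_mul, ← ofReal_div,
      ofReal_re]
    positivity

lemma two_mul_kiselmanIntegral_zero_lt {t : ℂ} (ht : t ≠ 0) :
    2 * kiselmanIntegral 0 < kiselmanIntegral t + kiselmanIntegral (-t) := by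
  set D : ℂ → ℝ := fun z ↦ Real.exp (-kiselmanPhi (t, z)) + Real.exp (-kiselmanPhi (-t, z)) -
    2 * Real.exp (-kiselmanPhi (0, z))
  have hD : ∀ z, D z = 2 * Real.exp (-kiselmanPhi (0, z)) * (Real.cosh (2 * (z * t).re) - 1) :=
    fun z ↦ by simp only [D, exp_neg_kiselmanPhi_add_exp_neg_kiselmanPhi_neg]; ring
  have h_sum : IntegrableOn
      (fun z ↦ Real.exp (-kiselmanPhi (t, z)) + Real.exp (-kiselmanPhi (-t, z))) (ball 0 1) :=
    (integrableOn_exp_neg_kiselmanPhi t).add (integrableOn_exp_neg_kiselmanPhi (-t))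
  have h_double := (integrableOn_exp_neg_kiselmanPhi 0).const_mul 2
  have hD_cont : Continuous D := by
    have := continuous_exp_neg_kiselmanPhi
    fun_prop
  have hD_nonneg : ∀ z, 0 ≤ D z := fun z ↦
    hD z ▸ mul_nonneg (by positivity) (sub_nonneg.2 (Real.one_le_cosh _))
  obtain ⟨z₀, hz₀_ball, hz₀⟩ := exists_mem_ball_re_mul_ne_zero ht
  have hD_z₀ : D z₀ ≠ 0 := by
    rw [hD]
    exact (mul_pos (by positivity) (sub_pos.2 (Real.one_lt_cosh.2 (by simpa using hz₀)))).ne'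
  have h_pos : 0 < ∫ z in ball 0 1, D z := by
    rw [setIntegral_pos_iff_support_of_nonneg_ae (.of_forall hD_nonneg) (h_sum.sub h_double)]
    exact (hD_cont.isOpen_support.inter isOpen_ball).measure_pos _ ⟨z₀, hD_z₀, hz₀_ball⟩
  rw [integral_sub h_sum h_double,
    integral_add (integrableOn_exp_neg_kiselmanPhi t) (integrableOn_exp_neg_kiselmanPhi (-t)),
    integral_const_mul] at h_pos
  unfold kiselmanIntegral
  linarith

lemma kiselmanPhiTilde_one_lt_zero : kiselmanPhiTilde 1 < kiselmanPhiTilde 0 := by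
  have h := two_mul_kiselmanIntegral_zero_lt one_ne_zero
  rw [show (-1 : ℂ) = ((-1 : Circle) : ℂ) * 1 by simp, kiselmanIntegral_mul] at h
  rw [kiselmanPhiTilde_eq_neg_log, kiselmanPhiTilde_eq_neg_log, neg_lt_neg_iff]
  exact Real.log_lt_log (kiselmanIntegral_pos 0) (by linarith)

/-- **Kiselman's example.** The function `φ(t,z) = |z|² - 2Re(zt)` is plurisubharmonic on `ℂ²`
(it satisfies the sub-mean value inequality on circles along every complex line), but
`φ̃(t) = -log ∫_{|z|<1} e^{-φ(t,z)} dλ(z)` is not subharmonic in `t`: it violates the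
sub-mean value inequality on some circle. -/
theorem kiselman_example :
    (∀ a b : ℂ × ℂ, ∀ c : ℂ, ∀ r : ℝ, 0 ≤ r →
      kiselmanPhi (a + c • b) ≤ (2 * π)⁻¹ *
        ∫ θ in (0:ℝ)..2 * π, kiselmanPhi (a + (c + (r : ℂ) * Complex.exp (θ * Complex.I)) • b))
    ∧ ∃ (c : ℂ) (r : ℝ), 0 < r ∧
      (2 * π)⁻¹ * (∫ θ in (0:ℝ)..2 * π, kiselmanPhiTilde (c + (r : ℂ) * Complex.exp (θ * Complex.I)))
        < kiselmanPhiTilde c := by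
  constructor
  · intro a b c r _
    rw [← circleAverage_eq_inv_mul_integral (fun w ↦ kiselmanPhi (a + w • b)),
      circleAverage_kiselmanPhi_add_smul]
    exact le_add_of_nonneg_right (mul_nonneg (sq_nonneg r) (normSq_nonneg _))
  · refine ⟨0, 1, one_pos, ?_⟩
    rw [← circleAverage_eq_inv_mul_integral, circleAverage_const_on_circle (a := kiselmanPhiTilde 1)
      fun t ht ↦ kiselmanPhiTilde_of_norm_eq_one (by simpa using ht)]
    exact kiselmanPhiTilde_one_lt_zero
end
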